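/- arXiv:2107.01832 — 2 statements merged into one kernel-verified Lean document; each statement's English description precedes it below -/
import Mathlib

section
/- For $\kappa \ge 1$, let $\beta = \frac{3\sqrt{\kappa}-2}{3\sqrt{\kappa}+2}$ and $y = \frac{1}{2\kappa}$. Then $g(\beta, y) = 4\beta(1-y) - [(1+\beta)(1-y)]^2 \ge \frac{2\kappa-1}{\kappa(3\sqrt{\kappa}+2)^2}$. -/
theorem stmt_13 (κ : ℝ) (hκ : 1 ≤ κ)
    (β y : ℝ) (hβ : β = (3 * Real.sqrt κ - 2) / (3 * Real.sqrt κ + 2)) (hy : y = 1 / (2 * κ)) :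
    (2 * κ - 1) / (κ * (3 * Real.sqrt κ + 2) ^ 2) ≤
      4 * β * (1 - y) - ((1 + β) * (1 - y)) ^ 2 := by
  have hκ0 : (0:ℝ) < κ := lt_of_lt_of_le one_pos hκ
  set s := Real.sqrt κ with hs
  have hs1 : 1 ≤ s := by
    rw [hs, show (1:ℝ) = Real.sqrt 1 by simp]
    exact Real.sqrt_le_sqrt hκ
  have hs2 : s ^ 2 = κ := Real.sq_sqrt hκ0.le
  have ha : 3 * s + 2 ≠ 0 := by nlinarith
  subst hβ hy
  rw [← hs2]
  have hsne : s ≠ 0 := by nlinarith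
  apply le_of_eq
  field_simp
  ring
end

section
/- Let $H \in \mathbb{R}^{n\times n}$ be symmetric positive definite, $0 < \eta \le 1/\lambda_{max}(H)$, and $\frac{1-\sqrt{\eta\lambda_{min}(H)}}{1+\sqrt{\eta\lambda_{min}(H)}} \le \beta < 1$. Let $M = \begin{bmatrix}(1+\beta)(I_n - \eta H) & \beta(-I_n + \eta H)\\ I_n & 0_n\end{bmatrix}$. Then the spectral radius of $M$ equals $\sqrt{\beta(1-\eta\lambda_{min}(H))} < 1$; in particular $M^k \to 0$ as $k \to \infty$. -/
set_option linter.unreachableTactic false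
set_option linter.unusedTactic false
set_option linter.unnecessarySeqFocus false

open Matrix in
lemma det_fromBlocks_diag {n : ℕ} (a b c d : Fin n → ℂ) :
    (Matrix.fromBlocks (diagonal a) (diagonal b) (diagonal c) (diagonal d)).det
      = ∏ i, (a i * d i - b i * c i) := by
  classical
  let e : Fin n ⊕ Fin n ≃ Fin 2 × Fin n :=
    { toFun := Sum.elim (fun i => (0, i)) (fun i => (1, i))
      invFun := fun p => if p.1 = 0 then Sum.inl p.2 else Sum.inr p.2
      left_inv := by rintro (i | i) <;> simp
      right_inv := by rintro ⟨x, i⟩; fin_cases x <;> simp }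
  have key : Matrix.fromBlocks (diagonal a) (diagonal b) (diagonal c) (diagonal d)
      = (Matrix.blockDiagonal (fun i => !![a i, b i; c i, d i])).submatrix e e := by
    ext x y
    rcases x with i | i <;> rcases y with j | j <;>
      by_cases h : i = j <;>
      simp [e, Matrix.blockDiagonal_apply, Matrix.diagonal_apply, h, Matrix.fromBlocks]
  rw [key, Matrix.det_submatrix_equiv_self, Matrix.det_blockDiagonal]
  simp [Matrix.det_fin_two]

lemma root_normSq {a c : ℝ} (h : a ^ 2 ≤ 4 * c) {z : ℂ}
    (hz : z ^ 2 - (a : ℂ) * z + (c : ℂ) = 0) : Complex.normSq z = c := by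
  set x := z.re
  set y := z.im
  have hre : x ^ 2 - y ^ 2 - a * x + c = 0 := by
    have := congrArg Complex.re hz
    simpa [pow_two, Complex.mul_re, Complex.mul_im, x, y] using this
  have him : y * (2 * x - a) = 0 := by
    have := congrArg Complex.im hz
    simp [pow_two, Complex.mul_re, Complex.mul_im, x, y] at this
    ring_nf
    ring_nf at this
    linarith
  have hns : Complex.normSq z = x ^ 2 + y ^ 2 := by
    simp [Complex.normSq_apply, pow_two, x, y]
  rcases mul_eq_zero.mp him with hy | hx
  · have h0 : (2 * x - a) ^ 2 = a ^ 2 - 4 * c := by nlinarith [hre, hy]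
    have h1 : (2 * x - a) ^ 2 = 0 := le_antisymm (by linarith) (sq_nonneg _)
    have h2 : 2 * x = a := by nlinarith [h1]
    nlinarith [hre, hy, hns, h2]
  · have ha : a = 2 * x := by linarith
    rw [ha] at hre
    nlinarith [hre, hns]

lemma root_exists {a c : ℝ} (h : a ^ 2 ≤ 4 * c) :
    ∃ z : ℂ, z ^ 2 - (a : ℂ) * z + (c : ℂ) = 0 ∧ Complex.normSq z = c := by
  have hnn : 0 ≤ c - a ^ 2 / 4 := by linarith
  set y := Real.sqrt (c - a ^ 2 / 4) with hy
  have hy2 : y ^ 2 = c - a ^ 2 / 4 := Real.sq_sqrt hnn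
  refine ⟨⟨a / 2, y⟩, ?_, ?_⟩
  · apply Complex.ext <;>
      simp [pow_two, Complex.mul_re, Complex.mul_im] <;> nlinarith [hy2]
  · simp [Complex.normSq_apply]; nlinarith [hy2]

open Filter Topology in
lemma aux_tendsto_entry {m : Type*} [Fintype m] [DecidableEq m] (A : Matrix m m ℂ)
    (h : spectralRadius ℂ A < 1) (i j : m) :
    Tendsto (fun k : ℕ => ‖(A ^ k) i j‖) atTop (𝓝 0) := by
  letI : SeminormedRing (Matrix m m ℂ) := Matrix.linftyOpSemiNormedRing
  letI : NormedRing (Matrix m m ℂ) := Matrix.linftyOpNormedRing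
  letI : NormedAlgebra ℂ (Matrix m m ℂ) := Matrix.linftyOpNormedAlgebra
  letI : CompleteSpace (Matrix m m ℂ) :=
    FiniteDimensional.complete ℂ (Matrix m m ℂ)
  have gel := spectrum.pow_nnnorm_pow_one_div_tendsto_nhds_spectralRadius A
  obtain ⟨r, hr1, hr2⟩ := exists_between h
  have hr2' : r ≠ ⊤ := (hr2.trans_le le_top).ne
  have hev : ∀ᶠ k : ℕ in atTop, (‖A ^ k‖₊ : ENNReal) ^ (1 / (k : ℝ)) < r :=
    gel.eventually_lt_const hr1
  have hbound : ∀ᶠ k : ℕ in atTop, ‖(A ^ k) i j‖ ≤ r.toReal ^ k := by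
    filter_upwards [hev, eventually_ge_atTop 1] with k hk hk1
    have hk0 : (k : ℝ) ≠ 0 := by positivity
    have h1 : (‖A ^ k‖₊ : ENNReal) ≤ r ^ (k : ℝ) := by
      have := ENNReal.rpow_le_rpow hk.le (by positivity : (0:ℝ) ≤ (k : ℝ))
      rwa [← ENNReal.rpow_mul, one_div, inv_mul_cancel₀ hk0,
        ENNReal.rpow_one] at this
    have h2 : ‖A ^ k‖ ≤ (r ^ (k : ℝ)).toReal := by
      have := ENNReal.toReal_mono (by simp [ENNReal.rpow_ne_top_of_nonneg, hr2']
         : r ^ (k:ℝ) ≠ ⊤) h1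
      simpa using this
    have h3 : (r ^ (k : ℝ)).toReal = r.toReal ^ k := by
      rw [← ENNReal.toReal_rpow, Real.rpow_natCast]
    have hentry : ‖(A ^ k) i j‖₊ ≤ ‖A ^ k‖₊ := by
      rw [Matrix.linfty_opNNNorm_def]
      have h5 : ‖(A ^ k) i j‖₊ ≤ ∑ j', ‖(A ^ k) i j'‖₊ :=
        Finset.single_le_sum (f := fun j' => ‖(A ^ k) i j'‖₊) (fun _ _ => zero_le)
          (Finset.mem_univ j)
      exact le_trans h5 (Finset.le_sup (f := fun i => ∑ j', ‖(A ^ k) i j'‖₊)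
        (Finset.mem_univ i))
    calc ‖(A ^ k) i j‖ ≤ ‖A ^ k‖ := hentry
      _ ≤ r.toReal ^ k := h3 ▸ h2
  have hpow : Tendsto (fun k : ℕ => r.toReal ^ k) atTop (𝓝 0) := by
    apply tendsto_pow_atTop_nhds_zero_of_lt_one ENNReal.toReal_nonneg
    exact (ENNReal.toReal_lt_of_lt_ofReal (by simpa using hr2))
  exact squeeze_zero' (Filter.Eventually.of_forall fun k => norm_nonneg _) hbound hpow

lemma map_ofReal_mul {m : Type*} [Fintype m] (X Y : Matrix m m ℝ) :
    (X * Y).map Complex.ofReal = X.map Complex.ofReal * Y.map Complex.ofReal := by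
  ext i j
  simp [Matrix.mul_apply, Matrix.map_apply]

lemma map_ofReal_pow {m : Type*} [Fintype m] [DecidableEq m] (X : Matrix m m ℝ) (k : ℕ) :
    (X ^ k).map Complex.ofReal = (X.map Complex.ofReal) ^ k := by
  induction k with
  | zero => simpa using Matrix.map_one Complex.ofReal (by simp) (by simp)
  | succ k ih => rw [pow_succ, pow_succ, map_ofReal_mul, ih]

open Matrix in
lemma spectrum_char {n : ℕ} {H : Matrix (Fin n) (Fin n) ℝ} (hH : H.IsHermitian) (η β : ℝ)
    {M : Matrix (Fin n ⊕ Fin n) (Fin n ⊕ Fin n) ℝ}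
    (hM : M = Matrix.fromBlocks
      ((1 + β) • ((1 : Matrix (Fin n) (Fin n) ℝ) - η • H))
      (β • (-(1 : Matrix (Fin n) (Fin n) ℝ) + η • H))
      (1 : Matrix (Fin n) (Fin n) ℝ) (0 : Matrix (Fin n) (Fin n) ℝ)) (z : ℂ) :
    z ∈ spectrum ℂ (M.map Complex.ofReal) ↔
      ∃ i, z ^ 2 - (((1 + β) * (1 - η * hH.eigenvalues i) : ℝ) : ℂ) * z
        + ((β * (1 - η * hH.eigenvalues i) : ℝ) : ℂ) = 0 := by
  classical
  set ev := hH.eigenvalues with hev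
  set U : Matrix (Fin n) (Fin n) ℝ := (hH.eigenvectorUnitary : Matrix (Fin n) (Fin n) ℝ) with hUdef
  have hUmem := (hH.eigenvectorUnitary).2
  rw [Unitary.mem_iff] at hUmem
  have hU1 : star U * U = 1 := hUmem.1
  have hdiag : star U * H * U = Matrix.diagonal ev := by
    simpa [RCLike.ofReal_real_eq_id, Function.comp, Unitary.conjStarAlgAut_apply, mul_assoc, hUdef] using hH.conjStarAlgAut_star_eigenvectorUnitary
  have hmul : ∀ (X Y : Matrix (Fin n) (Fin n) ℝ),
      (X * Y).map Complex.ofReal = X.map Complex.ofReal * Y.map Complex.ofReal := by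
    intro X Y
    ext i j
    simp [Matrix.mul_apply, Matrix.map_apply]
  set Uc : Matrix (Fin n) (Fin n) ℂ := U.map Complex.ofReal with hUc
  set Hc : Matrix (Fin n) (Fin n) ℂ := H.map Complex.ofReal with hHc
  set Dc : Matrix (Fin n) (Fin n) ℂ := Matrix.diagonal (fun i => (ev i : ℂ)) with hDc
  have hstarUc : star Uc = (star U).map Complex.ofReal := by
    ext i j
    simp [Matrix.conjTranspose_apply, Matrix.map_apply, Complex.conj_ofReal, hUc]
  have hone : (1 : Matrix (Fin n) (Fin n) ℝ).map Complex.ofReal = 1 :=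
    Matrix.map_one _ (by simp) (by simp)
  have hUc1 : star Uc * Uc = 1 := by
    rw [hstarUc, ← hmul, hU1, hone]
  have hdiagc : star Uc * Hc * Uc = Dc := by
    rw [hstarUc, ← hmul, ← hmul, hdiag, Matrix.diagonal_map (by simp)]
  set aC : Fin n → ℂ := fun i => (((1 + β) * (1 - η * ev i) : ℝ) : ℂ) with haC
  set cC : Fin n → ℂ := fun i => ((β * (1 - η * ev i) : ℝ) : ℂ) with hcC
  set Ac : Matrix (Fin n) (Fin n) ℂ :=
    ((1 + β : ℝ) : ℂ) • ((1 : Matrix (Fin n) (Fin n) ℂ) - ((η : ℝ) : ℂ) • Hc) with hAc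
  set Bc : Matrix (Fin n) (Fin n) ℂ :=
    ((β : ℝ) : ℂ) • (-(1 : Matrix (Fin n) (Fin n) ℂ) + ((η : ℝ) : ℂ) • Hc) with hBc
  have hMc : M.map Complex.ofReal = Matrix.fromBlocks Ac Bc 1 0 := by
    subst hM
    ext i j
    rcases i with i | i <;> rcases j with j | j <;>
      simp only [Matrix.map_apply, Matrix.fromBlocks_apply₁₁, Matrix.fromBlocks_apply₁₂,
        Matrix.fromBlocks_apply₂₁, Matrix.fromBlocks_apply₂₂, hAc, hBc, hHc,
        Matrix.smul_apply, Matrix.sub_apply, Matrix.add_apply, Matrix.neg_apply,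
        Matrix.one_apply, Matrix.zero_apply, smul_eq_mul] <;>
      first
        | (split_ifs <;> push_cast <;> ring)
        | (push_cast; ring)
        | simp
  have hAblock : star Uc * Ac * Uc = Matrix.diagonal aC := by
    rw [hAc, Matrix.mul_smul, Matrix.smul_mul, Matrix.mul_sub, Matrix.sub_mul, Matrix.mul_one,
      Matrix.mul_smul, Matrix.smul_mul, hUc1, hdiagc]
    ext i j
    by_cases h : i = j <;>
      simp [Matrix.diagonal_apply, Matrix.one_apply, h, haC, hDc, Matrix.sub_apply,
        Matrix.smul_apply] <;> push_cast <;> ring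
  have hBblock : star Uc * Bc * Uc = Matrix.diagonal (fun i => -(cC i)) := by
    rw [hBc, Matrix.mul_smul, Matrix.smul_mul, Matrix.mul_add, Matrix.add_mul, Matrix.mul_neg,
      Matrix.neg_mul, Matrix.mul_one, Matrix.mul_smul, Matrix.smul_mul, hUc1, hdiagc]
    ext i j
    by_cases h : i = j <;>
      simp [Matrix.diagonal_apply, Matrix.one_apply, h, hcC, hDc, Matrix.add_apply,
        Matrix.neg_apply, Matrix.smul_apply] <;> push_cast <;> ring
  set V : Matrix (Fin n ⊕ Fin n) (Fin n ⊕ Fin n) ℂ := Matrix.fromBlocks Uc 0 0 Uc with hV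
  have hVs : star V = Matrix.fromBlocks (star Uc) 0 0 (star Uc) := by
    rw [hV, Matrix.star_eq_conjTranspose, Matrix.fromBlocks_conjTranspose]
    simp [Matrix.star_eq_conjTranspose]
  have hsVV : star V * V = 1 := by
    rw [hVs, hV, Matrix.fromBlocks_multiply]
    simp only [Matrix.mul_zero, Matrix.zero_mul, add_zero, zero_add, hUc1]
    exact Matrix.fromBlocks_one
  have hdet : (algebraMap ℂ (Matrix (Fin n ⊕ Fin n) (Fin n ⊕ Fin n) ℂ) z
      - M.map Complex.ofReal).det = ∏ i, (z ^ 2 - aC i * z + cC i) := by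
    set X := algebraMap ℂ (Matrix (Fin n ⊕ Fin n) (Fin n ⊕ Fin n) ℂ) z - M.map Complex.ofReal
      with hX
    have hdet0 : ((star V).det * V.det) = 1 := by
      rw [← Matrix.det_mul, hsVV, Matrix.det_one]
    have hdet1 : X.det = (star V * X * V).det := by
      rw [Matrix.det_mul, Matrix.det_mul]
      calc X.det = X.det * ((star V).det * V.det) := by rw [hdet0, mul_one]
        _ = (star V).det * X.det * V.det := by ring
    have hconj : star V * X * V
        = Matrix.fromBlocks (Matrix.diagonal (fun i => z - aC i))
            (Matrix.diagonal (fun i => (cC i)))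
            (Matrix.diagonal (fun _ => (-1 : ℂ))) (Matrix.diagonal (fun _ => z)) := by
      rw [hX, Algebra.algebraMap_eq_smul_one, Matrix.mul_sub, Matrix.sub_mul,
        Matrix.mul_smul, Matrix.mul_one, Matrix.smul_mul, hsVV, hMc, hVs, hV,
        Matrix.fromBlocks_multiply, Matrix.fromBlocks_multiply]
      simp only [Matrix.mul_zero, Matrix.zero_mul, add_zero, zero_add, Matrix.mul_one,
        Matrix.one_mul]
      rw [hAblock, hBblock, hUc1]
      ext i j
      rcases i with i | i <;> rcases j with j | j <;>
        simp [Matrix.sub_apply, Matrix.smul_apply, Matrix.one_apply, Matrix.diagonal_apply,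
          Matrix.fromBlocks_apply₁₁, Matrix.fromBlocks_apply₁₂, Matrix.fromBlocks_apply₂₁,
          Matrix.fromBlocks_apply₂₂] <;>
        split_ifs <;> ring
    rw [hdet1, hconj, det_fromBlocks_diag]
    apply Finset.prod_congr rfl
    intro i _
    ring
  rw [spectrum.mem_iff, Matrix.isUnit_iff_isUnit_det, isUnit_iff_ne_zero, not_ne_iff, hdet,
    Finset.prod_eq_zero_iff]
  simp [haC, hcC]

open Filter Topology in
theorem stmt_15 (n : ℕ) (hn : 0 < n)
    (H : Matrix (Fin n) (Fin n) ℝ) (hH : H.IsHermitian)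
    (hpos : ∀ i, 0 < hH.eigenvalues i)
    (η β : ℝ) (hη0 : 0 < η)
    (hη1 : η ≤ 1 / (⨆ i, hH.eigenvalues i))
    (hβ1 : (1 - Real.sqrt (η * ⨅ i, hH.eigenvalues i)) /
        (1 + Real.sqrt (η * ⨅ i, hH.eigenvalues i)) ≤ β)
    (hβ2 : β < 1)
    (M : Matrix (Fin n ⊕ Fin n) (Fin n ⊕ Fin n) ℝ)
    (hM : M = Matrix.fromBlocks
      ((1 + β) • ((1 : Matrix (Fin n) (Fin n) ℝ) - η • H))
      (β • (-(1 : Matrix (Fin n) (Fin n) ℝ) + η • H))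
      (1 : Matrix (Fin n) (Fin n) ℝ) (0 : Matrix (Fin n) (Fin n) ℝ)) :
    spectralRadius ℂ (M.map (Complex.ofReal)) =
        ENNReal.ofReal (Real.sqrt (β * (1 - η * ⨅ i, hH.eigenvalues i))) ∧
      Real.sqrt (β * (1 - η * ⨅ i, hH.eigenvalues i)) < 1 ∧
      Filter.Tendsto (fun k : ℕ => M ^ k) Filter.atTop (nhds 0) := by
  classical
  haveI : Nonempty (Fin n) := ⟨⟨0, hn⟩⟩
  set ev := hH.eigenvalues with hev
  have hbdd : BddBelow (Set.range ev) := (Set.finite_range ev).bddBelow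
  have hbddA : BddAbove (Set.range ev) := (Set.finite_range ev).bddAbove
  obtain ⟨i0, hi0⟩ : ∃ i0, ∀ i, ev i0 ≤ ev i := Finite.exists_min ev
  have hmin : (⨅ i, ev i) = ev i0 := le_antisymm (ciInf_le hbdd i0) (le_ciInf hi0)
  have hinf_le : ∀ i, (⨅ i, ev i) ≤ ev i := fun i => ciInf_le hbdd i
  have hle_sup : ∀ i, ev i ≤ ⨆ i, ev i := fun i => le_ciSup hbddA i
  set p : ℝ := η * ⨅ i, ev i with hp
  have hmin_pos : 0 < ⨅ i, ev i := hmin ▸ hpos i0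
  have hp_pos : 0 < p := mul_pos hη0 hmin_pos
  have hsup_pos : 0 < ⨆ i, ev i := lt_of_lt_of_le (hpos i0) (hle_sup i0)
  have hηsup : η * (⨆ i, ev i) ≤ 1 := by
    rw [le_div_iff₀ hsup_pos] at hη1
    linarith
  have hηev_le1 : ∀ i, η * ev i ≤ 1 := fun i =>
    le_trans (mul_le_mul_of_nonneg_left (hle_sup i) hη0.le) hηsup
  have hp_le1 : p ≤ 1 := by
    have : p = η * ev i0 := by rw [hp, hmin]
    rw [this]
    exact hηev_le1 i0
  have hβ0 : 0 ≤ β := by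
    refine le_trans (div_nonneg ?_ ?_) hβ1
    · have : Real.sqrt p ≤ 1 := Real.sqrt_le_one.mpr hp_le1
      linarith
    · have : 0 ≤ Real.sqrt p := Real.sqrt_nonneg _
      linarith
  have hkey : (1 + β) ^ 2 * (1 - p) ≤ 4 * β := by
    set s := Real.sqrt p with hs
    have hs2 : s ^ 2 = p := Real.sq_sqrt hp_pos.le
    have hs0 : 0 ≤ s := Real.sqrt_nonneg _
    have hs1 : s ≤ 1 := Real.sqrt_le_one.mpr hp_le1
    have h1 : 1 - s ≤ β * (1 + s) := by
      rw [div_le_iff₀ (by linarith)] at hβ1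
      linarith
    have h2 : 0 ≤ (1 + s) - β * (1 - s) := by nlinarith
    nlinarith [mul_nonneg (show 0 ≤ β * (1 + s) - (1 - s) by linarith) h2]
  have hple : ∀ i, p ≤ η * ev i := fun i => by
    rw [hp]
    exact mul_le_mul_of_nonneg_left (hinf_le i) hη0.le
  have hdisc : ∀ i, ((1 + β) * (1 - η * ev i)) ^ 2 ≤ 4 * (β * (1 - η * ev i)) := by
    intro i
    have ht0 : 0 ≤ 1 - η * ev i := by linarith [hηev_le1 i]
    have ht1 : 1 - η * ev i ≤ 1 - p := by linarith [hple i]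
    have h2 : (1 + β) ^ 2 * (1 - η * ev i) ≤ 4 * β := by nlinarith [sq_nonneg (1 + β)]
    nlinarith [mul_le_mul_of_nonneg_right h2 ht0]
  have hchar := fun z => spectrum_char hH η β hM z
  set T : ℝ := Real.sqrt (β * (1 - p)) with hT
  have hc_bound : ∀ i, β * (1 - η * ev i) ≤ β * (1 - p) := fun i =>
    mul_le_mul_of_nonneg_left (by linarith [hple i]) hβ0
  have hnorm : ∀ z ∈ spectrum ℂ (M.map Complex.ofReal), ‖z‖ ≤ T := by
    intro z hz
    obtain ⟨i, hi⟩ := (hchar z).mp hz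
    have hns := root_normSq (hdisc i) hi
    have hzn : ‖z‖ = Real.sqrt (β * (1 - η * ev i)) := by
      rw [Complex.norm_def, hns]
    rw [hzn, hT]
    exact Real.sqrt_le_sqrt (hc_bound i)
  obtain ⟨z0, hz0eq, hz0ns⟩ := root_exists (hdisc i0)
  have hz0mem : z0 ∈ spectrum ℂ (M.map Complex.ofReal) := (hchar z0).mpr ⟨i0, hz0eq⟩
  have hz0norm : ‖z0‖ = T := by
    have hpe : p = η * ev i0 := by rw [hp, hmin]
    rw [Complex.norm_def, hz0ns, hT, hpe]
  have hsr : spectralRadius ℂ (M.map Complex.ofReal) = ENNReal.ofReal T := by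
    apply le_antisymm
    · rw [spectralRadius]
      refine iSup₂_le fun z hz => ?_
      rw [← enorm_eq_nnnorm, ← ofReal_norm]
      exact ENNReal.ofReal_le_ofReal (hnorm z hz)
    · have hkey2 : ENNReal.ofReal T = (‖z0‖₊ : ENNReal) := by
        rw [← enorm_eq_nnnorm, ← ofReal_norm, hz0norm]
      rw [hkey2, spectralRadius]
      exact le_iSup₂ (f := fun z (_ : z ∈ spectrum ℂ (M.map Complex.ofReal)) =>
        (‖z‖₊ : ENNReal)) z0 hz0mem
  have hT1 : T < 1 := by
    have h4 : β * (1 - p) < 1 := by nlinarith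
    calc T < Real.sqrt 1 := Real.sqrt_lt_sqrt (by nlinarith) h4
      _ = 1 := Real.sqrt_one
  refine ⟨hsr, hT1, ?_⟩
  have hlt : spectralRadius ℂ (M.map Complex.ofReal) < 1 := by
    rw [hsr]
    calc ENNReal.ofReal T < ENNReal.ofReal 1 := by
          exact ENNReal.ofReal_lt_ofReal_iff_of_nonneg (Real.sqrt_nonneg _) |>.mpr hT1
      _ = 1 := ENNReal.ofReal_one
  have hent := fun i j => aux_tendsto_entry (M.map Complex.ofReal) hlt i j
  refine tendsto_pi_nhds.mpr fun i => tendsto_pi_nhds.mpr fun j => ?_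
  have hb : ∀ k : ℕ, ‖(M ^ k) i j‖ ≤ ‖((M.map Complex.ofReal) ^ k) i j‖ := by
    intro k
    rw [← map_ofReal_pow]
    simp [Matrix.map_apply]
  have := squeeze_zero_norm hb (hent i j)
  simpa using this
end
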